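/- Let f : [a,b] → ℝ be differentiable with f' integrable, a < b, q ≥ 1, and |f'|^q convex on [a,b]. Then |(1/6)[f(a) + 4f((a+b)/2) + f(b)] - (1/(b-a)) ∫_a^b f(x) dx| ≤ (b-a)(5/72)^{1-1/q} [ ((29/648)|f'((a+b)/2)|^q + (2/81)|f'(a)|^q)^{1/q} + ((29/648)|f'((a+b)/2)|^q + (2/81)|f'(b)|^q)^{1/q} ]. -/

import Mathlib

open MeasureTheory intervalIntegral Set

/-!
Put `m = (a + b) / 2`. Integrating by parts against the kernel `x - (5a + b) / 6` on `[a, m]`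
and `x - (a + 5b) / 6` on `[m, b]` writes the Simpson error as `(1 / (b - a)) ∫ K f'`. On each
half, Hölder's inequality with weight `|K|` bounds `∫ |K| |f'|` by
`(∫ |K|) ^ (1 - 1/q) * (∫ |K| |f'| ^ q) ^ (1/q)`, and convexity bounds `|f'| ^ q` by its chord.
The constants `5/72`, `29/648` and `2/81` are the integrals of `|K|` and of `|K|` against the chord.
-/

theorem memLp_ofReal_of_integrable_rpow {α : Type*} [MeasurableSpace α] {μ : Measure α}
    {r : ℝ} (hr : 0 < r) {h : α → ℝ} (h0 : 0 ≤ᵐ[μ] h) (hm : AEStronglyMeasurable h μ)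
    (hi : Integrable (fun x => h x ^ r) μ) : MemLp h (ENNReal.ofReal r) μ := by
  refine (integrable_norm_rpow_iff hm (by simpa using hr) ENNReal.ofReal_ne_top).1 ?_
  rw [ENNReal.toReal_ofReal hr.le]
  exact hi.congr (h0.mono fun x hx => by simp only [Real.norm_of_nonneg hx])

theorem integral_mul_le_weighted_power_mean {α : Type*} [MeasurableSpace α] {μ : Measure α}
    {q : ℝ} (hq : 1 ≤ q) {w g : α → ℝ} (hw : 0 ≤ᵐ[μ] w) (hg : 0 ≤ᵐ[μ] g)
    (hwm : AEStronglyMeasurable w μ) (hgm : AEStronglyMeasurable g μ)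
    (hwi : Integrable w μ) (hwgi : Integrable (fun x => w x * g x ^ q) μ) :
    ∫ x, w x * g x ∂μ ≤
      (∫ x, w x ∂μ) ^ (1 - 1 / q) * (∫ x, w x * g x ^ q ∂μ) ^ (1 / q) := by
  rcases hq.eq_or_lt with rfl | hq
  · simp
  -- Hölder with exponents `p = q / (q - 1)` and `q`, applied to `w ^ (1/p)` and `w ^ (1/q) * g`.
  set p := q.conjExponent
  have hpq : p.HolderConjugate q := (Real.HolderConjugate.conjExponent hq).symm
  have hp : 1 - 1 / q = 1 / p := by rw [one_div, one_div, hpq.symm.one_sub_inv]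
  have hF0 : 0 ≤ᵐ[μ] fun x => w x ^ (1 / p) := hw.mono fun x hx => Real.rpow_nonneg hx _
  have hG0 : 0 ≤ᵐ[μ] fun x => w x ^ (1 / q) * g x :=
    (hw.and hg).mono fun x ⟨hwx, hgx⟩ => mul_nonneg (Real.rpow_nonneg hwx _) hgx
  have hF : ∀ᵐ x ∂μ, (w x ^ (1 / p)) ^ p = w x := hw.mono fun x hx => by
    rw [← Real.rpow_mul hx, one_div_mul_cancel hpq.pos.ne', Real.rpow_one]
  have hG : ∀ᵐ x ∂μ, (w x ^ (1 / q) * g x) ^ q = w x * g x ^ q :=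
    (hw.and hg).mono fun x ⟨hwx, hgx⟩ => by
      rw [Real.mul_rpow (Real.rpow_nonneg hwx _) hgx, ← Real.rpow_mul hwx,
        one_div_mul_cancel hpq.symm.pos.ne', Real.rpow_one]
  have hFG : ∀ᵐ x ∂μ, w x ^ (1 / p) * (w x ^ (1 / q) * g x) = w x * g x :=
    hw.mono fun x hx => by
      rw [← mul_assoc, ← Real.rpow_add' hx (by rw [hpq.one_div_add_one_div]; simp),
        hpq.one_div_add_one_div, div_one, Real.rpow_one]
  have holder := integral_mul_le_Lp_mul_Lq_of_nonneg hpq hF0 hG0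
    (memLp_ofReal_of_integrable_rpow hpq.pos hF0
      (hwm.aemeasurable.pow_const _).aestronglyMeasurable
      (hwi.congr (hF.mono fun x hx => hx.symm)))
    (memLp_ofReal_of_integrable_rpow hpq.symm.pos hG0
      ((hwm.aemeasurable.pow_const _).mul hgm.aemeasurable).aestronglyMeasurable
      (hwgi.congr (hG.mono fun x hx => hx.symm)))
  rwa [integral_congr_ae hFG, integral_congr_ae hF, integral_congr_ae hG, ← hp] at holder

theorem ConvexOn.le_chord_of_mem_Icc {f : ℝ → ℝ} {u v x : ℝ} (hf : ConvexOn ℝ (Icc u v) f)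
    (huv : u < v) (hx : x ∈ Icc u v) :
    f x ≤ ((v - x) * f u + (x - u) * f v) / (v - u) := by
  rw [le_div_iff₀ (sub_pos.2 huv), mul_comm]
  rcases hx.1.eq_or_lt with rfl | hux
  · linarith
  rcases hx.2.eq_or_lt with rfl | hxv
  · linarith
  exact hf.secant_mono_aux1 (left_mem_Icc.2 huv.le) (right_mem_Icc.2 huv.le) hux hxv

theorem integral_mul_abs_le_of_convexOn_rpow {u v q : ℝ} (huv : u < v) (hq : 1 ≤ q)
    {w g : ℝ → ℝ} (hw : Continuous w) (hw0 : ∀ x, 0 ≤ w x) (hg : Measurable g)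
    (hconv : ConvexOn ℝ (Icc u v) fun x => |g x| ^ q) :
    ∫ x in u..v, w x * |g x| ≤ (∫ x in u..v, w x) ^ (1 - 1 / q) *
      (∫ x in u..v, w x * (((v - x) * |g u| ^ q + (x - u) * |g v| ^ q) / (v - u))) ^ (1 / q) := by
  set chord : ℝ → ℝ := fun x => ((v - x) * |g u| ^ q + (x - u) * |g v| ^ q) / (v - u)
  have hle : ∀ x ∈ Ioc u v, w x * |g x| ^ q ≤ w x * chord x := fun x hx =>
    mul_le_mul_of_nonneg_left (hconv.le_chord_of_mem_Icc huv (Ioc_subset_Icc_self hx)) (hw0 x)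
  have hwchord : IntegrableOn (fun x => w x * chord x) (Ioc u v) :=
    (hw.mul (by fun_prop)).integrableOn_Ioc
  have hwgq : IntegrableOn (fun x => w x * |g x| ^ q) (Ioc u v) := by
    refine hwchord.mono' (hw.measurable.mul (hg.abs.pow_const q)).aestronglyMeasurable ?_
    filter_upwards [ae_restrict_mem measurableSet_Ioc] with x hx
    rw [Real.norm_of_nonneg (mul_nonneg (hw0 x) (Real.rpow_nonneg (abs_nonneg _) _))]
    exact hle x hx
  simp only [integral_of_le huv.le]
  calc ∫ x in Ioc u v, w x * |g x|
      ≤ (∫ x in Ioc u v, w x) ^ (1 - 1 / q) * (∫ x in Ioc u v, w x * |g x| ^ q) ^ (1 / q) :=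
        integral_mul_le_weighted_power_mean hq (.of_forall hw0) (.of_forall fun _ => abs_nonneg _)
          hw.aestronglyMeasurable hg.abs.aestronglyMeasurable hw.integrableOn_Ioc hwgq
    _ ≤ (∫ x in Ioc u v, w x) ^ (1 - 1 / q) * (∫ x in Ioc u v, w x * chord x) ^ (1 / q) := by
        refine mul_le_mul_of_nonneg_left (Real.rpow_le_rpow ?_ ?_ (by positivity))
          (Real.rpow_nonneg (setIntegral_nonneg measurableSet_Ioc fun x _ => hw0 x) _)
        · exact setIntegral_nonneg measurableSet_Ioc fun x _ =>
            mul_nonneg (hw0 x) (Real.rpow_nonneg (abs_nonneg _) _)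
        · exact setIntegral_mono_on hwgq hwchord measurableSet_Ioc hle

theorem abs_integral_sub_mul_le_of_convexOn {u v c q : ℝ} (huv : u < v) (hq : 1 ≤ q)
    {g : ℝ → ℝ} (hg : Measurable g) (hconv : ConvexOn ℝ (Icc u v) fun x => |g x| ^ q) :
    |∫ x in u..v, (x - c) * g x| ≤ (∫ x in u..v, |x - c|) ^ (1 - 1 / q) *
      (∫ x in u..v, |x - c| * (((v - x) * |g u| ^ q + (x - u) * |g v| ^ q) / (v - u))) ^
        (1 / q) :=
  calc |∫ x in u..v, (x - c) * g x| ≤ ∫ x in u..v, |x - c| * |g x| := by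
        simpa only [abs_mul] using abs_integral_le_integral_abs (f := fun x => (x - c) * g x) huv.le
    _ ≤ _ := integral_mul_abs_le_of_convexOn_rpow huv hq (by fun_prop) (fun _ => abs_nonneg _) hg
        hconv

theorem integral_mul_sub_add_mul_sub_sq (s t c α β : ℝ) :
    ∫ x in s..t, (α * (x - c) + β * (x - c) ^ 2) =
      α * ((t - c) ^ 2 - (s - c) ^ 2) / 2 + β * ((t - c) ^ 3 - (s - c) ^ 3) / 3 := by
  rw [intervalIntegral.integral_add, intervalIntegral.integral_const_mul,
    intervalIntegral.integral_const_mul, integral_comp_sub_right (fun x => x),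
    integral_comp_sub_right (fun x => x ^ 2)]
  · simp only [integral_id, integral_pow]
    ring
  all_goals exact Continuous.intervalIntegrable (by fun_prop) _ _

theorem integral_abs_sub_mul_affine {u v c : ℝ} (hu : u ≤ c) (hv : c ≤ v) (α β : ℝ) :
    ∫ x in u..v, |x - c| * (α + β * (x - c)) =
      α * ((c - u) ^ 2 + (v - c) ^ 2) / 2 + β * ((v - c) ^ 3 - (c - u) ^ 3) / 3 := by
  have hcont : Continuous fun x => |x - c| * (α + β * (x - c)) := by fun_prop
  rw [← integral_add_adjacent_intervals (hcont.intervalIntegrable u c)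
    (hcont.intervalIntegrable c v)]
  have hleft : ∫ x in u..c, |x - c| * (α + β * (x - c)) =
      -∫ x in u..c, (α * (x - c) + β * (x - c) ^ 2) := by
    rw [← intervalIntegral.integral_neg]
    refine integral_congr fun x hx => ?_
    rw [uIcc_of_le hu] at hx
    rw [abs_of_nonpos (by linarith [hx.2])]
    ring
  have hright : ∫ x in c..v, |x - c| * (α + β * (x - c)) =
      ∫ x in c..v, (α * (x - c) + β * (x - c) ^ 2) := by
    refine integral_congr fun x hx => ?_
    rw [uIcc_of_le hv] at hx
    rw [abs_of_nonneg (by linarith [hx.1])]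
    ring
  rw [hleft, hright, integral_mul_sub_add_mul_sub_sq, integral_mul_sub_add_mul_sub_sq]
  ring

theorem integral_abs_sub_eq {u v c : ℝ} (hu : u ≤ c) (hv : c ≤ v) :
    ∫ x in u..v, |x - c| = ((c - u) ^ 2 + (v - c) ^ 2) / 2 := by
  simpa using integral_abs_sub_mul_affine hu hv 1 0

theorem integral_abs_sub_mul_chord_eq {u v c A B : ℝ} (huv : u < v) (hu : u ≤ c)
    (hv : c ≤ v) :
    ∫ x in u..v, |x - c| * (((v - x) * A + (x - u) * B) / (v - u)) =
      ((v - c) * A + (c - u) * B) / (v - u) * ((c - u) ^ 2 + (v - c) ^ 2) / 2 +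
        (B - A) / (v - u) * ((v - c) ^ 3 - (c - u) ^ 3) / 3 := by
  have hvu : v - u ≠ 0 := (sub_pos.2 huv).ne'
  rw [← integral_abs_sub_mul_affine hu hv]
  refine integral_congr fun x _ => ?_
  field_simp
  ring

theorem abs_integral_sub_left_third_mul_le {u v q : ℝ} (huv : u < v) (hq : 1 ≤ q)
    {g : ℝ → ℝ} (hg : Measurable g) (hconv : ConvexOn ℝ (Icc u v) fun x => |g x| ^ q) :
    |∫ x in u..v, (x - (2 * u + v) / 3) * g x| ≤ (5 / 18 * (v - u) ^ 2) ^ (1 - 1 / q) *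
      ((29 / 162 * |g v| ^ q + 8 / 81 * |g u| ^ q) * (v - u) ^ 2) ^ (1 / q) := by
  have hu : u ≤ (2 * u + v) / 3 := by linarith
  have hv : (2 * u + v) / 3 ≤ v := by linarith
  have hvu : v - u ≠ 0 := (sub_pos.2 huv).ne'
  convert abs_integral_sub_mul_le_of_convexOn huv hq hg hconv using 3
  · rw [integral_abs_sub_eq hu hv]; ring
  · rw [integral_abs_sub_mul_chord_eq huv hu hv]; field_simp; ring

theorem abs_integral_sub_right_third_mul_le {u v q : ℝ} (huv : u < v) (hq : 1 ≤ q)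
    {g : ℝ → ℝ} (hg : Measurable g) (hconv : ConvexOn ℝ (Icc u v) fun x => |g x| ^ q) :
    |∫ x in u..v, (x - (u + 2 * v) / 3) * g x| ≤ (5 / 18 * (v - u) ^ 2) ^ (1 - 1 / q) *
      ((29 / 162 * |g u| ^ q + 8 / 81 * |g v| ^ q) * (v - u) ^ 2) ^ (1 / q) := by
  have hu : u ≤ (u + 2 * v) / 3 := by linarith
  have hv : (u + 2 * v) / 3 ≤ v := by linarith
  have hvu : v - u ≠ 0 := (sub_pos.2 huv).ne'
  convert abs_integral_sub_mul_le_of_convexOn huv hq hg hconv using 3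
  · rw [integral_abs_sub_eq hu hv]; ring
  · rw [integral_abs_sub_mul_chord_eq huv hu hv]; field_simp; ring

theorem integral_sub_mul_deriv_eq {f : ℝ → ℝ} {u v c : ℝ}
    (hf : ∀ x ∈ uIcc u v, DifferentiableAt ℝ f x)
    (hint : IntervalIntegrable (deriv f) volume u v) :
    ∫ x in u..v, (x - c) * deriv f x = (v - c) * f v - (u - c) * f u - ∫ x in u..v, f x := by
  rw [integral_mul_deriv_eq_deriv_mul (u := fun x => x - c)
    (fun x _ => (hasDerivAt_id x).sub_const c) (fun x hx => (hf x hx).hasDerivAt)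
    intervalIntegrable_const hint]
  simp

theorem simpson_sub_average_eq {f : ℝ → ℝ} {a b : ℝ} (hab : a < b)
    (hf : ∀ x ∈ Icc a b, DifferentiableAt ℝ f x)
    (hint : IntervalIntegrable (deriv f) volume a b) :
    (1 / 6) * (f a + 4 * f ((a + b) / 2) + f b) - (1 / (b - a)) * ∫ x in a..b, f x =
      (1 / (b - a)) * ((∫ x in a..(a + b) / 2, (x - (2 * a + (a + b) / 2) / 3) * deriv f x) +
        ∫ x in (a + b) / 2..b, (x - ((a + b) / 2 + 2 * b) / 3) * deriv f x) := by
  set m := (a + b) / 2 with hm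
  have hab' : uIcc a b = Icc a b := uIcc_of_le hab.le
  have h₁ : uIcc a m ⊆ uIcc a b := by
    rw [hab', uIcc_of_le (by linarith)]; exact Icc_subset_Icc le_rfl (by linarith)
  have h₂ : uIcc m b ⊆ uIcc a b := by
    rw [hab', uIcc_of_le (by linarith)]; exact Icc_subset_Icc (by linarith) le_rfl
  have hf' : ∀ x ∈ uIcc a b, DifferentiableAt ℝ f x := hab' ▸ hf
  have hfc : ContinuousOn f (uIcc a b) := fun x hx => (hf' x hx).continuousAt.continuousWithinAt
  rw [integral_sub_mul_deriv_eq (fun x hx => hf' x (h₁ hx)) (hint.mono_set h₁),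
    integral_sub_mul_deriv_eq (fun x hx => hf' x (h₂ hx)) (hint.mono_set h₂),
    ← integral_add_adjacent_intervals (hfc.mono h₁).intervalIntegrable
      (hfc.mono h₂).intervalIntegrable]
  have hba : b - a ≠ 0 := by linarith
  field_simp
  ring

theorem rpow_one_sub_mul_rpow_of_mul {α β t : ℝ} (hα : 0 ≤ α) (hβ : 0 ≤ β) (ht : 0 < t)
    (s : ℝ) :
    (α * t) ^ (1 - s) * (β * t) ^ s = α ^ (1 - s) * β ^ s * t := by
  rw [Real.mul_rpow hα ht.le, Real.mul_rpow hβ ht.le, mul_mul_mul_comm, ← Real.rpow_add ht,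
    sub_add_cancel, Real.rpow_one, mul_assoc]

theorem stmt10 (f : ℝ → ℝ) (a b q : ℝ) (hab : a < b) (hq : 1 ≤ q)
    (hf : ∀ x ∈ Set.Icc a b, DifferentiableAt ℝ f x)
    (hint : IntervalIntegrable (deriv f) volume a b)
    (hconv : ConvexOn ℝ (Set.Icc a b) (fun x => |deriv f x| ^ q)) :
    |(1/6) * (f a + 4 * f ((a + b) / 2) + f b) - (1 / (b - a)) * ∫ x in a..b, f x|
      ≤ (b - a) * (5/72 : ℝ) ^ (1 - 1 / q) *
        (((29/648) * |deriv f ((a + b) / 2)| ^ q + (2/81) * |deriv f a| ^ q) ^ (1 / q)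
          + ((29/648) * |deriv f ((a + b) / 2)| ^ q
            + (2/81) * |deriv f b| ^ q) ^ (1 / q)) := by
  set m := (a + b) / 2 with hm
  have ham : a < m := by linarith
  have hmb : m < b := by linarith
  have hL := abs_integral_sub_left_third_mul_le ham hq (measurable_deriv f)
    (hconv.subset (Icc_subset_Icc le_rfl hmb.le) (convex_Icc a m))
  have hR := abs_integral_sub_right_third_mul_le hmb hq (measurable_deriv f)
    (hconv.subset (Icc_subset_Icc ham.le le_rfl) (convex_Icc m b))
  set Ga := |deriv f a| ^ q
  set Gm := |deriv f m| ^ q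
  set Gb := |deriv f b| ^ q
  have hba : 0 < b - a := by linarith
  have hhalf (K : ℝ) : K * (m - a) ^ 2 = K / 4 * (b - a) ^ 2 ∧
      K * (b - m) ^ 2 = K / 4 * (b - a) ^ 2 := ⟨by ring, by ring⟩
  rw [(hhalf _).1, (hhalf _).1,
    rpow_one_sub_mul_rpow_of_mul (by norm_num) (by positivity) (by positivity)] at hL
  rw [(hhalf _).2, (hhalf _).2,
    rpow_one_sub_mul_rpow_of_mul (by norm_num) (by positivity) (by positivity)] at hR
  rw [simpson_sub_average_eq hab hf hint, abs_mul, abs_of_pos (by positivity)]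
  calc _ ≤ 1 / (b - a) * (_ + _) := by
        gcongr; exact (abs_add_le _ _).trans (add_le_add hL hR)
    _ = _ := by
      rw [show (5 : ℝ) / 18 / 4 = 5 / 72 by norm_num,
        show (29 / 162 * Gm + 8 / 81 * Ga) / 4 = 29 / 648 * Gm + 2 / 81 * Ga by ring,
        show (29 / 162 * Gm + 8 / 81 * Gb) / 4 = 29 / 648 * Gm + 2 / 81 * Gb by ring]
      field_simp
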